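/- Let d ≥ 2, let X be a d × d complex matrix, and let p ≥ p₀ ≥ 1 be real numbers. Then 2^(−1/p₀) * (σ₁(X)^p₀ + σ₂(X)^p₀)^(1/p₀) ≤ 2^(−1/p) * ‖X‖_p ≤ max( 2^(−1/p₀) * ‖X‖_{p₀}, σ₁(X) ), where ‖X‖_p = (∑ i, σ_i(X)^p)^(1/p) is the Schatten p-norm. -/

import Mathlib

open Matrix BigOperators

/-- The entries of `v` sorted in non-increasing order: `sortedDesc v 0` is the largest, etc. -/
noncomputable def sortedDesc {d : ℕ} (v : Fin d → ℝ) : Fin d → ℝ :=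
  fun k => v (Tuple.sort v k.rev)

/-- The singular values of `X` in non-increasing order:
`singularValues X 0 = σ₁(X)`, `singularValues X 1 = σ₂(X)`, ... -/
noncomputable def singularValues {d : ℕ} (X : Matrix (Fin d) (Fin d) ℂ) : Fin d → ℝ :=
  sortedDesc fun i => Real.sqrt ((Matrix.isHermitian_conjTranspose_mul_self X).eigenvalues i)

/-- The Schatten `p`-norm of `X`. -/
noncomputable def schattenNorm {d : ℕ} (p : ℝ) (X : Matrix (Fin d) (Fin d) ℂ) : ℝ :=
  (∑ i, singularValues X i ^ p) ^ (1 / p)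

/-! Write `M_q = ((∑ᵢ σᵢ ^ q) / 2) ^ (1 / q)`, so that the middle term is `M_p`. The lower bound is
monotonicity of power means in the exponent, applied to `(σ₁, σ₂)`, followed by adding the other
singular values. For the upper bound, `σᵢ ^ p ≤ σ₁ ^ (p - p₀) * σᵢ ^ p₀` gives
`M_p ≤ M_{p₀} ^ (p₀ / p) * σ₁ ^ (1 - p₀ / p)`, and a weighted geometric mean of two numbers is at
most their maximum. -/

lemma sortedDesc_antitone {d : ℕ} (v : Fin d → ℝ) : Antitone (sortedDesc v) :=
  fun _ _ hij => Tuple.monotone_sort v (Fin.rev_le_rev.mpr hij)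

lemma singularValues_nonneg {d : ℕ} (X : Matrix (Fin d) (Fin d) ℂ) (i : Fin d) :
    0 ≤ singularValues X i :=
  Real.sqrt_nonneg _

lemma singularValues_antitone {d : ℕ} (X : Matrix (Fin d) (Fin d) ℂ) :
    Antitone (singularValues X) :=
  sortedDesc_antitone _

namespace Real

lemma rpow_neg_mul_rpow {c x : ℝ} (hc : 0 ≤ c) (hx : 0 ≤ x) (r : ℝ) :
    c ^ (-r) * x ^ r = (x / c) ^ r := by
  rw [rpow_neg hc, div_rpow hx hc, inv_mul_eq_div]

lemma rpow_mul_rpow_le_max {a b θ : ℝ} (ha : 0 ≤ a) (hb : 0 ≤ b) (hθ₀ : 0 ≤ θ) (hθ₁ : θ ≤ 1) :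
    a ^ θ * b ^ (1 - θ) ≤ max a b := by
  have hm : 0 ≤ max a b := ha.trans (le_max_left a b)
  have : 0 ≤ 1 - θ := by linarith
  calc a ^ θ * b ^ (1 - θ) ≤ max a b ^ θ * max a b ^ (1 - θ) := by
        gcongr
        exacts [le_max_left a b, le_max_right a b]
    _ = max a b := by rw [← rpow_add' hm (by norm_num), add_sub_cancel, rpow_one]

variable {ι : Type*} (s : Finset ι)

theorem rpow_mean_le_rpow_mean (w z : ι → ℝ) (hw : ∀ i ∈ s, 0 ≤ w i)
    (hw' : ∑ i ∈ s, w i = 1) (hz : ∀ i ∈ s, 0 ≤ z i) {p₀ p : ℝ} (hp₀ : 0 < p₀) (hp : p₀ ≤ p) :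
    (∑ i ∈ s, w i * z i ^ p₀) ^ (1 / p₀) ≤ (∑ i ∈ s, w i * z i ^ p) ^ (1 / p) := by
  have hp_pos : 0 < p := hp₀.trans_le hp
  have hmean_nonneg : 0 ≤ ∑ i ∈ s, w i * z i ^ p₀ :=
    Finset.sum_nonneg fun i hi => mul_nonneg (hw i hi) (rpow_nonneg (hz i hi) _)
  -- Jensen for the convex function `t ↦ t ^ (p / p₀)`, applied to the values `z i ^ p₀`.
  have jensen : (∑ i ∈ s, w i * z i ^ p₀) ^ (p / p₀) ≤ ∑ i ∈ s, w i * z i ^ p := by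
    convert rpow_arith_mean_le_arith_mean_rpow s w (fun i => z i ^ p₀) hw hw'
      (fun i hi => rpow_nonneg (hz i hi) _) ((one_le_div hp₀).2 hp) using 3 with i hi
    rw [← rpow_mul (hz i hi), mul_div_cancel₀ _ hp₀.ne']
  calc (∑ i ∈ s, w i * z i ^ p₀) ^ (1 / p₀)
      = ((∑ i ∈ s, w i * z i ^ p₀) ^ (p / p₀)) ^ (1 / p) := by
        rw [← rpow_mul hmean_nonneg]
        congr 1
        field_simp
    _ ≤ (∑ i ∈ s, w i * z i ^ p) ^ (1 / p) := by gcongr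

lemma rpow_mean2_le_rpow_mean2 {a b p₀ p : ℝ} (ha : 0 ≤ a) (hb : 0 ≤ b) (hp₀ : 0 < p₀)
    (hp : p₀ ≤ p) : ((a ^ p₀ + b ^ p₀) / 2) ^ (1 / p₀) ≤ ((a ^ p + b ^ p) / 2) ^ (1 / p) := by
  have h := rpow_mean_le_rpow_mean Finset.univ (fun _ => 1 / 2) ![a, b] (by norm_num)
    (by norm_num) (fun i _ => by fin_cases i <;> assumption) hp₀ hp
  simp only [Fin.sum_univ_two, Matrix.cons_val_zero, Matrix.cons_val_one] at h
  convert h using 2 <;> ring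

lemma sum_rpow_le_rpow_sub_mul_sum_rpow (z : ι → ℝ) {M p₀ p : ℝ} (hz : ∀ i ∈ s, 0 ≤ z i)
    (hzM : ∀ i ∈ s, z i ≤ M) (hp₀ : 0 < p₀) (hp : p₀ ≤ p) :
    ∑ i ∈ s, z i ^ p ≤ M ^ (p - p₀) * ∑ i ∈ s, z i ^ p₀ := by
  rw [Finset.mul_sum]
  refine Finset.sum_le_sum fun i hi => ?_
  calc z i ^ p = z i ^ (p - p₀) * z i ^ p₀ := by
        rw [← rpow_add' (hz i hi) (by linarith), sub_add_cancel]
    _ ≤ M ^ (p - p₀) * z i ^ p₀ := mul_le_mul_of_nonneg_right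
        (rpow_le_rpow (hz i hi) (hzM i hi) (by linarith)) (rpow_nonneg (hz i hi) _)

theorem rpow_sum_div_le_max (z : ι → ℝ) {M c p₀ p : ℝ} (hz : ∀ i ∈ s, 0 ≤ z i)
    (hzM : ∀ i ∈ s, z i ≤ M) (hM : 0 ≤ M) (hc : 0 ≤ c) (hp₀ : 0 < p₀) (hp : p₀ ≤ p) :
    ((∑ i ∈ s, z i ^ p) / c) ^ (1 / p) ≤ max (((∑ i ∈ s, z i ^ p₀) / c) ^ (1 / p₀)) M := by
  have hp_pos : 0 < p := hp₀.trans_le hp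
  have hsum_nonneg (q : ℝ) : 0 ≤ (∑ i ∈ s, z i ^ q) / c :=
    div_nonneg (Finset.sum_nonneg fun i hi => rpow_nonneg (hz i hi) _) hc
  set T := (∑ i ∈ s, z i ^ p₀) / c
  have hpT : (∑ i ∈ s, z i ^ p) / c ≤ M ^ (p - p₀) * T := by
    rw [mul_div_assoc']
    exact div_le_div_of_nonneg_right (sum_rpow_le_rpow_sub_mul_sum_rpow s z hz hzM hp₀ hp) hc
  calc ((∑ i ∈ s, z i ^ p) / c) ^ (1 / p)
      ≤ (M ^ (p - p₀) * T) ^ (1 / p) := rpow_le_rpow (hsum_nonneg p) hpT (by positivity)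
    _ = (T ^ (1 / p₀)) ^ (p₀ / p) * M ^ (1 - p₀ / p) := by
        rw [mul_rpow (rpow_nonneg hM _) (hsum_nonneg p₀), ← rpow_mul hM,
          ← rpow_mul (hsum_nonneg p₀), mul_comm]
        congr 2 <;> field_simp
    _ ≤ max (T ^ (1 / p₀)) M :=
        rpow_mul_rpow_le_max (rpow_nonneg (hsum_nonneg p₀) _) hM (by positivity)
          ((div_le_one hp_pos).2 hp)

end Real

/-- For `p ≥ p₀ ≥ 1`,
`2^(-1/p₀) (σ₁(X)^p₀ + σ₂(X)^p₀)^(1/p₀) ≤ 2^(-1/p) ‖X‖_p ≤ max(2^(-1/p₀) ‖X‖_{p₀}, σ₁(X))`. -/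
theorem schatten_kyfan_p0_bounds (d : ℕ) (hd : 2 ≤ d)
    (X : Matrix (Fin d) (Fin d) ℂ) (p p₀ : ℝ) (hp₀ : 1 ≤ p₀) (hp : p₀ ≤ p) :
    (2 : ℝ) ^ (-(1 / p₀)) *
        (singularValues X ⟨0, by omega⟩ ^ p₀ + singularValues X ⟨1, by omega⟩ ^ p₀) ^ (1 / p₀)
      ≤ (2 : ℝ) ^ (-(1 / p)) * schattenNorm p X
    ∧ (2 : ℝ) ^ (-(1 / p)) * schattenNorm p X
      ≤ max ((2 : ℝ) ^ (-(1 / p₀)) * schattenNorm p₀ X) (singularValues X ⟨0, by omega⟩) := by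
  have hp₀_pos : 0 < p₀ := one_pos.trans_le hp₀
  set σ := singularValues X
  set i₀ : Fin d := ⟨0, by omega⟩
  set i₁ : Fin d := ⟨1, by omega⟩
  have hσ : ∀ i, 0 ≤ σ i := singularValues_nonneg X
  have hσ_pow (q : ℝ) (i : Fin d) : 0 ≤ σ i ^ q := Real.rpow_nonneg (hσ i) q
  simp only [schattenNorm]
  rw [Real.rpow_neg_mul_rpow zero_le_two (add_nonneg (hσ_pow p₀ i₀) (hσ_pow p₀ i₁)),
    Real.rpow_neg_mul_rpow zero_le_two (Finset.sum_nonneg fun i _ => hσ_pow p i),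
    Real.rpow_neg_mul_rpow zero_le_two (Finset.sum_nonneg fun i _ => hσ_pow p₀ i)]
  constructor
  · have hpair : σ i₀ ^ p + σ i₁ ^ p ≤ ∑ i, σ i ^ p :=
      Finset.add_le_sum (fun i _ => hσ_pow p i) (Finset.mem_univ _) (Finset.mem_univ _)
        (by simp [i₀, i₁])
    calc ((σ i₀ ^ p₀ + σ i₁ ^ p₀) / 2) ^ (1 / p₀)
        ≤ ((σ i₀ ^ p + σ i₁ ^ p) / 2) ^ (1 / p) :=
          Real.rpow_mean2_le_rpow_mean2 (hσ i₀) (hσ i₁) hp₀_pos hp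
      _ ≤ ((∑ i, σ i ^ p) / 2) ^ (1 / p) :=
          Real.rpow_le_rpow (div_nonneg (add_nonneg (hσ_pow p i₀) (hσ_pow p i₁)) zero_le_two)
            (div_le_div_of_nonneg_right hpair zero_le_two)
            (one_div_nonneg.mpr (hp₀_pos.le.trans hp))
  · exact Real.rpow_sum_div_le_max Finset.univ σ (fun i _ => hσ i)
      (fun i _ => singularValues_antitone X (Fin.mk_le_mk.mpr (Nat.zero_le _)))
      (hσ i₀) zero_le_two hp₀_pos hp
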